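/- Let G be a bipartite graph on vertex classes of sizes v and w containing no cycle of length 4 or 6. If every vertex of G has degree at least 2, then w ≤ ⌊v^2/4⌋ and v ≤ ⌊w^2/4⌋. -/

import Mathlib

/-!
Every vertex `b ∈ W` picks two of its neighbours in `V`; view the chosen pair as an edge of an
auxiliary graph `H` on `V`. Two vertices of `W` choosing the same pair would close a 4-cycle, so `H`
has `w` edges, and a triangle of `H` lifts to a 6-cycle of `G`. Mantel's theorem (Turán's theorem
for triangles) then gives `w ≤ ⌊v²/4⌋`; swapping the sides gives the other bound.
-/

open Finset SimpleGraph Function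

namespace SimpleGraph

variable {V : Type*} {G : SimpleGraph V}

theorem CliqueFree.card_edgeFinset_le_sq_div_four [Fintype V] [Fintype G.edgeSet]
    (h : G.CliqueFree 3) : #G.edgeFinset ≤ Fintype.card V ^ 2 / 4 := by
  classical
  have turan := h.card_edgeFinset_le (r := 2)
  dsimp only at turan
  rw [Nat.choose_eq_zero_of_lt (Nat.mod_lt _ two_pos), add_zero, Nat.add_one_sub_one, mul_one]
    at turan
  convert Nat.le_trans turan (Nat.div_le_div_right (Nat.sub_le _ _)) using 3

theorem exists_adj_adj_ne {x : V} [Fintype (G.neighborSet x)] (hx : 2 ≤ G.degree x) :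
    ∃ u u', u ≠ u' ∧ G.Adj x u ∧ G.Adj x u' := by
  rw [← card_neighborFinset_eq_degree] at hx
  obtain ⟨u, hu, u', hu', hne⟩ := one_lt_card.mp hx
  exact ⟨u, u', hne, (mem_neighborFinset ..).mp hu, (mem_neighborFinset ..).mp hu'⟩

theorem exists_isCycle_length_four {p x q y : V} (hpq : p ≠ q) (hxy : x ≠ y)
    (hpx : G.Adj p x) (hxq : G.Adj x q) (hqy : G.Adj q y) (hyp : G.Adj y p) :
    ∃ c : G.Walk p p, c.IsCycle ∧ c.length = 4 := by
  refine ⟨.cons hpx (.cons hxq (.cons hqy (.cons hyp .nil))), ?_, rfl⟩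
  have := hpx.ne; have := hxq.ne; have := hqy.ne; have := hyp.ne
  simp_all [Walk.cons_isCycle_iff, eq_comm]

theorem exists_isCycle_length_six {p x q y r z : V} (hpq : p ≠ q) (hpr : p ≠ r) (hqr : q ≠ r)
    (hxy : x ≠ y) (hxz : x ≠ z) (hyz : y ≠ z) (hpy : p ≠ y) (hqz : q ≠ z) (hrx : r ≠ x)
    (hpx : G.Adj p x) (hxq : G.Adj x q) (hqy : G.Adj q y) (hyr : G.Adj y r)
    (hrz : G.Adj r z) (hzp : G.Adj z p) :
    ∃ c : G.Walk p p, c.IsCycle ∧ c.length = 6 := by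
  refine ⟨.cons hpx (.cons hxq (.cons hqy (.cons hyr (.cons hrz (.cons hzp .nil))))), ?_, rfl⟩
  have := hpx.ne; have := hxq.ne; have := hqy.ne; have := hyr.ne; have := hrz.ne; have := hzp.ne
  simp_all [Walk.cons_isCycle_iff, eq_comm]

theorem cycle_length_ne_comap {W : Type*} {G : SimpleGraph W} {f : V → W} (hf : Injective f)
    {n : ℕ} (h : ∀ (x) (c : G.Walk x x), c.IsCycle → c.length ≠ n) :
    ∀ (x) (c : (G.comap f).Walk x x), c.IsCycle → c.length ≠ n := fun x c hc => by
  simpa using h _ (c.map (Hom.comap f G)) (hc.map hf)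

section Bipartite

variable {α β : Type*} {G : SimpleGraph (α ⊕ β)}

open Sum

theorem injective_of_cycle_length_ne_four
    (h4 : ∀ (x) (c : G.Walk x x), c.IsCycle → c.length ≠ 4) {e : β → Sym2 α}
    (he : ∀ b, ¬(e b).IsDiag) (hadj : ∀ b, ∀ a ∈ e b, G.Adj (inl a) (inr b)) :
    Injective e := by
  intro b b' hbb'
  by_contra hne
  rcases hb : e b with ⟨a, a'⟩
  have ha : a ≠ a' := by simpa [hb] using he b
  have hb' : e b' = s(a, a') := hbb' ▸ hb
  obtain ⟨c, hc, hlen⟩ := exists_isCycle_length_four (p := inl a) (q := inl a') (x := inr b)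
    (y := inr b') (by simpa) (by simpa) (hadj b a (by simp [hb])) (hadj b a' (by simp [hb])).symm
    (hadj b' a' (by simp [hb'])) (hadj b' a (by simp [hb'])).symm
  exact h4 _ c hc hlen

theorem cliqueFree_three_fromEdgeSet_range
    (h6 : ∀ (x) (c : G.Walk x x), c.IsCycle → c.length ≠ 6) {e : β → Sym2 α}
    (hadj : ∀ b, ∀ a ∈ e b, G.Adj (inl a) (inr b)) :
    (fromEdgeSet (Set.range e)).CliqueFree 3 := by
  classical
  intro t ht
  obtain ⟨x, y, z, ⟨⟨b₁, h₁⟩, hxy⟩, ⟨⟨b₃, h₃⟩, hxz⟩, ⟨⟨b₂, h₂⟩, hyz⟩, -⟩ :=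
    is3Clique_iff.mp ht
  have hb₁₂ : b₁ ≠ b₂ := by rintro rfl; rw [h₁, Sym2.eq_iff] at h₂; grind
  have hb₁₃ : b₁ ≠ b₃ := by rintro rfl; rw [h₁, Sym2.eq_iff] at h₃; grind
  have hb₂₃ : b₂ ≠ b₃ := by rintro rfl; rw [h₂, Sym2.eq_iff] at h₃; grind
  obtain ⟨c, hc, hlen⟩ := exists_isCycle_length_six (p := inl x) (x := inr b₁) (q := inl y)
    (y := inr b₂) (r := inl z) (z := inr b₃) (by simpa) (by simpa) (by simpa)
    (by simpa using hb₁₂) (by simpa using hb₁₃) (by simpa using hb₂₃) (by simp) (by simp)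
    (by simp) (hadj b₁ x (by simp [h₁])) (hadj b₁ y (by simp [h₁])).symm
    (hadj b₂ y (by simp [h₂])) (hadj b₂ z (by simp [h₂])).symm (hadj b₃ z (by simp [h₃]))
    (hadj b₃ x (by simp [h₃])).symm
  exact h6 _ c hc hlen

theorem card_right_le_sq_div_four_of_exists_adj_inl [Fintype α] [Fintype β]
    (h4 : ∀ (x) (c : G.Walk x x), c.IsCycle → c.length ≠ 4)
    (h6 : ∀ (x) (c : G.Walk x x), c.IsCycle → c.length ≠ 6)
    (hnbr : ∀ b, ∃ a a', a ≠ a' ∧ G.Adj (inl a) (inr b) ∧ G.Adj (inl a') (inr b)) :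
    Fintype.card β ≤ Fintype.card α ^ 2 / 4 := by
  classical
  choose a a' hne hadj hadj' using hnbr
  let e b := s(a b, a' b)
  have he b : ¬(e b).IsDiag := by simpa [e] using hne b
  have hadj_e b : ∀ x ∈ e b, G.Adj (inl x) (inr b) := by
    intro x hx
    rcases Sym2.mem_iff.mp hx with rfl | rfl
    exacts [hadj b, hadj' b]
  let H := fromEdgeSet (Set.range e)
  calc Fintype.card β
      ≤ #H.edgeFinset := by
        refine card_le_card_of_injOn e (fun b _ => ?_)
          (injective_of_cycle_length_ne_four h4 he hadj_e).injOn
        simpa [H, edgeSet_fromEdgeSet] using he b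
    _ ≤ Fintype.card α ^ 2 / 4 :=
        (cliqueFree_three_fromEdgeSet_range h6 hadj_e).card_edgeFinset_le_sq_div_four

theorem exists_eq_inl_of_adj_inr (hbip : ∀ x y, G.Adj x y → x.isLeft ≠ y.isLeft) {b : β}
    {u : α ⊕ β} (h : G.Adj (inr b) u) : ∃ a, u = inl a := by
  simpa [isLeft_iff] using (hbip _ _ h).symm

theorem card_right_le_sq_div_four [Fintype α] [Fintype β]
    (hbip : ∀ x y, G.Adj x y → x.isLeft ≠ y.isLeft)
    (h4 : ∀ (x) (c : G.Walk x x), c.IsCycle → c.length ≠ 4)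
    (h6 : ∀ (x) (c : G.Walk x x), c.IsCycle → c.length ≠ 6)
    (hnbr : ∀ x, ∃ u u', u ≠ u' ∧ G.Adj x u ∧ G.Adj x u') :
    Fintype.card β ≤ Fintype.card α ^ 2 / 4 := by
  refine card_right_le_sq_div_four_of_exists_adj_inl h4 h6 fun b => ?_
  obtain ⟨u, u', hne, hu, hu'⟩ := hnbr (inr b)
  obtain ⟨a, rfl⟩ := exists_eq_inl_of_adj_inr hbip hu
  obtain ⟨a', rfl⟩ := exists_eq_inl_of_adj_inr hbip hu'
  exact ⟨a, a', by simpa using hne, hu.symm, hu'.symm⟩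

theorem card_left_le_sq_div_four [Fintype α] [Fintype β]
    (hbip : ∀ x y, G.Adj x y → x.isLeft ≠ y.isLeft)
    (h4 : ∀ (x) (c : G.Walk x x), c.IsCycle → c.length ≠ 4)
    (h6 : ∀ (x) (c : G.Walk x x), c.IsCycle → c.length ≠ 6)
    (hnbr : ∀ x, ∃ u u', u ≠ u' ∧ G.Adj x u ∧ G.Adj x u') :
    Fintype.card α ≤ Fintype.card β ^ 2 / 4 := by
  have hswap : Injective (@swap β α) := swap_leftInverse.injective
  refine card_right_le_sq_div_four (G := G.comap swap)
    (fun x y h => by simpa [← bnot_isLeft] using hbip _ _ h)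
    (cycle_length_ne_comap hswap h4) (cycle_length_ne_comap hswap h6) fun x => ?_
  obtain ⟨u, u', hne, hu, hu'⟩ := hnbr x.swap
  exact ⟨u.swap, u'.swap, swap_leftInverse.injective.ne hne, by simpa using hu,
    by simpa using hu'⟩

end Bipartite

end SimpleGraph

theorem stmt_5 (v w : ℕ) (G : SimpleGraph (Fin v ⊕ Fin w)) [DecidableRel G.Adj]
    (hbip : ∀ x y, G.Adj x y → x.isLeft ≠ y.isLeft)
    (h4 : ∀ (x) (c : G.Walk x x), c.IsCycle → c.length ≠ 4)
    (h6 : ∀ (x) (c : G.Walk x x), c.IsCycle → c.length ≠ 6)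
    (hdeg : ∀ x, 2 ≤ G.degree x) :
    w ≤ v^2 / 4 ∧ v ≤ w^2 / 4 := by
  have hnbr x := exists_adj_adj_ne (hdeg x)
  simpa using And.intro (card_right_le_sq_div_four hbip h4 h6 hnbr)
    (card_left_le_sq_div_four hbip h4 h6 hnbr)
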